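/- Let Q be a quasi-order and α an ordinal. If there is a bad sequence f : ℕ → V̇_α(Q) with respect to the relation ≲*, then there is a bad array g : F → Q whose front has rank ≤ α. -/

import Mathlib

open Ordinal

universe u

/-! ### Basic wqo notions -/

/-- `P` is a wqo: there is no bad sequence. -/
def IsWqo (P : Type u) [Preorder P] : Prop :=
  ¬ ∃ f : ℕ → P, ∀ i j, i < j → ¬ f i ≤ f j

/-- `P` is well-founded as a quasi-order: no strictly descending ω-sequence. -/
def WFqo (P : Type u) [Preorder P] : Prop :=
  ¬ ∃ x : ℕ → P, ∀ i, x (i + 1) ≤ x i ∧ ¬ x i ≤ x (i + 1)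

/-! ### Fronts, identifying finite subsets of ℕ with their increasing enumerations -/

/-- `σ ⊑ τ`: `σ` is an initial segment of `τ`. -/
def InitSeg (σ τ : Finset ℕ) : Prop :=
  σ ⊆ τ ∧ ∀ a ∈ σ, ∀ b ∈ τ, b ≤ a → b ∈ σ

/-- `σ` is a (finite) initial segment of the set `X`. -/
def InitSegSet (σ : Finset ℕ) (X : Set ℕ) : Prop :=
  ↑σ ⊆ X ∧ ∀ a ∈ σ, ∀ b ∈ X, b ≤ a → b ∈ σ

/-- A front `(F, rk)`. -/
structure Front where
  F : Set (Finset ℕ)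
  infinite : F.Infinite
  antichain : ∀ σ ∈ F, ∀ τ ∈ F, InitSeg σ τ → σ = τ
  covers : ∀ X : Set ℕ, X.Infinite → (X ⊆ {n | ∃ σ ∈ F, n ∈ σ}) →
    ∃ σ ∈ F, InitSegSet σ X
  rk : Finset ℕ → Ordinal.{0}
  rk_strict : ∀ σ τ : Finset ℕ,
    (∃ ρ ∈ F, InitSeg σ ρ ∧ σ ≠ ρ) → (∃ ρ ∈ F, InitSeg τ ρ ∧ τ ≠ ρ) →
    InitSeg σ τ → σ ≠ τ → rk τ < rk σ

/-- The rank of the front is the rank of the empty sequence. -/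
def Front.rank (Fr : Front) : Ordinal.{0} := Fr.rk ∅

/-- `⋃ F`. -/
def Front.union (Fr : Front) : Set ℕ := {n | ∃ σ ∈ Fr.F, n ∈ σ}

/-- `σ ◁ τ`. -/
def Tri (σ τ : Finset ℕ) : Prop :=
  ∃ (hσ : σ.Nonempty) (hτ : τ.Nonempty),
    σ.min' hσ < τ.min' hτ ∧
    (InitSeg (σ.erase (σ.min' hσ)) τ ∨ InitSeg τ (σ.erase (σ.min' hσ)))

/-- `g` is a bad array on the front `Fr`. -/
def BadArray {P : Type u} [Preorder P] (Fr : Front) (g : Finset ℕ → P) : Prop :=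
  ∀ σ ∈ Fr.F, ∀ τ ∈ Fr.F, Tri σ τ → ¬ g σ ≤ g τ

/-- `P` is an `α`-wqo. -/
def IsAlphaWqo (α : Ordinal.{0}) (P : Type u) [Preorder P] : Prop :=
  WFqo P ∧ ∀ Fr : Front, Fr.rank < α → ∀ g : Finset ℕ → P, ¬ BadArray Fr g

/-! ### Transfinite sequences -/

/-- A transfinite sequence over `Q`: a function `|u| → Q` with `|u| > 0`. -/
structure TSeq (Q : Type u) where
  len : Ordinal.{0}
  pos : 0 < len
  toFun : {γ : Ordinal.{0} // γ < len} → Q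

namespace TSeq

variable {Q : Type u}

/-- Embeddability `u ⪯ v`. -/
def Emb [Preorder Q] (u v : TSeq Q) : Prop :=
  ∃ f : {γ // γ < u.len} → {γ // γ < v.len},
    (∀ a b, a.1 < b.1 → (f a).1 < (f b).1) ∧ ∀ a, u.toFun a ≤ v.toFun (f a)

/-- Weak embeddability `u ⪯* v`. -/
def WEmb [Preorder Q] (u v : TSeq Q) : Prop :=
  ∃ f : {γ // γ < u.len} → {γ // γ < v.len},
    (∀ a b, a.1 ≤ b.1 → (f a).1 ≤ (f b).1) ∧ ∀ a, u.toFun a ≤ v.toFun (f a)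

/-- The subsegment `u↾[γ, δ)`. -/
noncomputable def seg (u : TSeq Q) (γ δ : Ordinal.{0}) (h1 : γ < δ) (h2 : δ ≤ u.len) : TSeq Q where
  len := δ - γ
  pos := by rw [Ordinal.lt_sub]; simpa using h1
  toFun := fun ζ => u.toFun ⟨γ + ζ.1, lt_of_lt_of_le (Ordinal.lt_sub.mp ζ.2) h2⟩

/-- The tail `u↾[γ, |u|)`. -/
noncomputable def tail (u : TSeq Q) (γ : Ordinal.{0}) (h : γ < u.len) : TSeq Q :=
  u.seg γ u.len h le_rfl

/-- `u` is indecomposable: it embeds into each of its tails. -/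
def Indec [Preorder Q] (u : TSeq Q) : Prop :=
  ∀ γ (h : γ < u.len), u.Emb (u.tail γ h)

/-- `u` is weakly indecomposable. -/
def WIndec [Preorder Q] (u : TSeq Q) : Prop :=
  ∀ γ (h : γ < u.len), u.WEmb (u.tail γ h)

/-- `u ⊴ v`: cofinal embeddability. -/
def CofEmb [Preorder Q] (u v : TSeq Q) : Prop :=
  ∀ γ (h : γ < v.len), ∃ δ, ∃ h' : δ < u.len, (u.tail δ h').Emb (v.tail γ h)

/-- `u ⊴* v`: weak cofinal embeddability. -/
def WCofEmb [Preorder Q] (u v : TSeq Q) : Prop :=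
  ∀ γ (h : γ < v.len), ∃ δ, ∃ h' : δ < u.len, (u.tail δ h').WEmb (v.tail γ h)

end TSeq

/-! ### The hierarchy `V̇(Q)` -/

/-- Hereditarily countable, hereditarily nonempty sets with urelements from `Q`. -/
inductive Vdot (Q : Type u) : Type u where
  | up : Q → Vdot Q
  | sup : (ℕ → Vdot Q) → Vdot Q

namespace Vdot

variable {Q : Type u}

/-- Rank plus one for sets; `0` on urelements. -/
noncomputable def rkp : Vdot Q → Ordinal.{0}
  | .up _ => 0
  | .sup f => (⨆ n, rkp (f n)) + 1

/-- The rank of an element of `V̇(Q)` (`0` on urelements). -/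
noncomputable def rk : Vdot Q → Ordinal.{0}
  | .up _ => 0
  | .sup f => ⨆ n, rkp (f n)

/-- `x` is an urelement. -/
def IsUr (x : Vdot Q) : Prop := ∃ q, x = up q

/-- Membership in `V̇_α(Q)`: urelements, and sets of rank `< α`. -/
noncomputable def memV (α : Ordinal.{0}) (x : Vdot Q) : Prop := x.IsUr ∨ x.rk < α

/-- Auxiliary: `up p ≲ y` (equivalently `up p ≲* y`). -/
def leUp [Preorder Q] (p : Q) : Vdot Q → Prop
  | .up q => p ≤ q
  | .sup g => ∃ j, leUp p (g j)

/-- The relation `≲` on `V̇(Q)`. -/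
def vle [Preorder Q] : Vdot Q → Vdot Q → Prop
  | .up p, y => leUp p y
  | .sup _, .up _ => False
  | .sup f, .sup g => ∀ i, ∃ j, vle (f i) (g j)

/-- The relation `≲*` on `V̇(Q)`. -/
def vles [Preorder Q] : Vdot Q → Vdot Q → Prop
  | .up p, y => leUp p y
  | .sup f, .up q => ∀ i, vles (f i) (up q)
  | .sup f, .sup g => ∀ i, ∃ j, vles (f i) (g j)

/-- The support of an element of `V̇(Q)`. -/
def supp : Vdot Q → Set Q
  | .up q => {q}
  | .sup f => ⋃ n, supp (f n)

end Vdot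

section Statement4Aux

variable {Q : Type u} [Preorder Q]

/-- If `x ≲* b j` for some member `b j` of `sup b`, then `x ≲* sup b`. -/
theorem vles_memright : ∀ (x : Vdot Q) (b : ℕ → Vdot Q) (j : ℕ),
    x.vles (b j) → x.vles (.sup b)
  | .up p, b, j, h => ⟨j, h⟩
  | .sup a, b, j, h => by
      cases hbj : b j with
      | up q =>
        rw [hbj] at h
        intro i
        exact ⟨j, by rw [hbj]; exact h i⟩
      | sup c =>
        rw [hbj] at h
        intro i
        obtain ⟨l, hl⟩ := h i
        exact ⟨j, by rw [hbj]; exact vles_memright (a i) c l hl⟩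

theorem not_vles_mem {x : Vdot Q} {b : ℕ → Vdot Q} (h : ¬ x.vles (.sup b)) (j : ℕ) :
    ¬ x.vles (b j) := fun hc => h (vles_memright x b j hc)

/-- The key auxiliary invariant. -/
def Good (x z : Vdot Q) : Prop := match z with
  | .up q => ¬ x.vles (.up q)
  | .sup c => ∀ j, ¬ x.vles (c j)

theorem exists_good {a : ℕ → Vdot Q} {z : Vdot Q} (h : ¬ (Vdot.sup a).vles z) :
    ∃ i, Good (a i) z := by
  cases z with
  | up q =>
    have h' : ¬ ∀ i, (a i).vles (.up q) := h
    push_neg at h'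
    obtain ⟨i, hi⟩ := h'
    exact ⟨i, hi⟩
  | sup c =>
    have h' : ¬ ∀ i, ∃ j, (a i).vles (c j) := h
    push_neg at h'
    obtain ⟨i, hi⟩ := h'
    exact ⟨i, hi⟩

open Classical in
/-- Choice of a good member index. -/
noncomputable def choiceIdx (a : ℕ → Vdot Q) (z : Vdot Q) : ℕ :=
  if h : ∃ i, Good (a i) z then h.choose else 0

theorem choiceIdx_good {a : ℕ → Vdot Q} {z : Vdot Q} (h : ∃ i, Good (a i) z) :
    Good (a (choiceIdx a z)) z := by
  rw [choiceIdx, dif_pos h]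
  exact h.choose_spec

/-- The recursive unfolding function, staged by cardinality. -/
noncomputable def W (f : ℕ → Vdot Q) : ℕ → Finset ℕ → Vdot Q
  | 0, _ => f 0
  | (k+1), σ =>
    if hne : σ.Nonempty then
      if 2 ≤ σ.card then
        match W f k (σ.erase (σ.max' hne)) with
        | .up q => .up q
        | .sup a => a (choiceIdx a (W f k (σ.erase (σ.min' hne))))
      else f (σ.min' hne)
    else f 0

/-- The labelling of finite sets by elements of `V̇(Q)`. -/
noncomputable def w (f : ℕ → Vdot Q) (σ : Finset ℕ) : Vdot Q := W f σ.card σ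

theorem w_one (f : ℕ → Vdot Q) {σ : Finset ℕ} (hne : σ.Nonempty) (h : σ.card = 1) :
    w f σ = f (σ.min' hne) := by
  unfold w
  rw [h]
  simp only [W, dif_pos hne, if_neg (by omega : ¬ 2 ≤ σ.card)]

theorem w_big (f : ℕ → Vdot Q) {σ : Finset ℕ} (hne : σ.Nonempty) (h2 : 2 ≤ σ.card) :
    w f σ = (match w f (σ.erase (σ.max' hne)) with
      | .up q => .up q
      | .sup a => a (choiceIdx a (w f (σ.erase (σ.min' hne))))) := by
  obtain ⟨k, hk⟩ : ∃ k, σ.card = k + 1 := ⟨σ.card - 1, by omega⟩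
  have hmax : (σ.erase (σ.max' hne)).card = k := by
    rw [Finset.card_erase_of_mem (σ.max'_mem hne)]; omega
  have hmin : (σ.erase (σ.min' hne)).card = k := by
    rw [Finset.card_erase_of_mem (σ.min'_mem hne)]; omega
  unfold w
  rw [hk, hmax, hmin]
  simp only [W, dif_pos hne, if_pos h2]

theorem w_big_up {f : ℕ → Vdot Q} {σ : Finset ℕ} (hne : σ.Nonempty) (h2 : 2 ≤ σ.card)
    {q : Q} (hq : w f (σ.erase (σ.max' hne)) = .up q) : w f σ = .up q := by
  rw [w_big f hne h2, hq]

theorem w_big_sup {f : ℕ → Vdot Q} {σ : Finset ℕ} (hne : σ.Nonempty) (h2 : 2 ≤ σ.card)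
    {a : ℕ → Vdot Q} (ha : w f (σ.erase (σ.max' hne)) = .sup a) : ∃ i, w f σ = a i := by
  rw [w_big f hne h2, ha]
  exact ⟨_, rfl⟩

theorem w_big_good {f : ℕ → Vdot Q} {σ : Finset ℕ} (hne : σ.Nonempty) (h2 : 2 ≤ σ.card)
    {a : ℕ → Vdot Q} (ha : w f (σ.erase (σ.max' hne)) = .sup a)
    (hex : ∃ i, Good (a i) (w f (σ.erase (σ.min' hne)))) :
    Good (w f σ) (w f (σ.erase (σ.min' hne))) := by
  rw [w_big f hne h2, ha]
  exact choiceIdx_good hex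

/-! ### Initial segment lemmas -/

theorem initSeg_refl (σ : Finset ℕ) : InitSeg σ σ := ⟨le_refl _, fun _ _ b hb _ => hb⟩

theorem initSeg_trans {σ τ ρ : Finset ℕ} (h1 : InitSeg σ τ) (h2 : InitSeg τ ρ) : InitSeg σ ρ :=
  ⟨h1.1.trans h2.1, fun a ha b hb hba => h1.2 a ha b (h2.2 a (h1.1 ha) b hb hba) hba⟩

theorem initSeg_empty (τ : Finset ℕ) : InitSeg ∅ τ := ⟨Finset.empty_subset _, by simp⟩

theorem initSeg_singleton_min {τ : Finset ℕ} (hτ : τ.Nonempty) : InitSeg {τ.min' hτ} τ := by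
  refine ⟨Finset.singleton_subset_iff.mpr (τ.min'_mem hτ), ?_⟩
  intro a ha b hb hba
  rw [Finset.mem_singleton] at ha ⊢
  exact le_antisymm (hba.trans_eq ha) (τ.min'_le b hb)

theorem initSeg_erase_max {σ : Finset ℕ} (h : σ.Nonempty) : InitSeg (σ.erase (σ.max' h)) σ := by
  refine ⟨Finset.erase_subset _ _, ?_⟩
  intro a ha b hb hba
  rw [Finset.mem_erase] at ha ⊢
  have halt : a < σ.max' h := lt_of_le_of_ne (σ.le_max' a ha.2) ha.1
  refine ⟨?_, hb⟩
  rintro rfl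
  exact absurd hba (not_le.mpr halt)

theorem initSeg_step {ν μ : Finset ℕ} (h : InitSeg ν μ) (hne : ν ≠ μ) (hμ : μ.Nonempty) :
    InitSeg ν (μ.erase (μ.max' hμ)) := by
  have hmax : μ.max' hμ ∉ ν := by
    intro hm
    apply hne
    apply Finset.Subset.antisymm h.1
    intro b hb
    exact h.2 _ hm b hb (μ.le_max' b hb)
  refine ⟨fun a ha => Finset.mem_erase.mpr ⟨fun he => hmax (he ▸ ha), h.1 ha⟩, ?_⟩
  intro a ha b hb hba
  exact h.2 a ha b (Finset.mem_of_mem_erase hb) hba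

theorem initSeg_subset_of_card {ν μ : Finset ℕ} (h : InitSeg ν μ) (hc : ν ≠ μ) :
    ν.card < μ.card :=
  Finset.card_lt_card (lt_of_le_of_ne h.1 hc)

/-! ### min'/max' facts -/

theorem erase_max_nonempty {σ : Finset ℕ} (hne : σ.Nonempty) (h2 : 2 ≤ σ.card) :
    (σ.erase (σ.max' hne)).Nonempty := by
  rw [← Finset.card_pos, Finset.card_erase_of_mem (σ.max'_mem hne)]; omega

theorem erase_min_nonempty {σ : Finset ℕ} (hne : σ.Nonempty) (h2 : 2 ≤ σ.card) :
    (σ.erase (σ.min' hne)).Nonempty := by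
  rw [← Finset.card_pos, Finset.card_erase_of_mem (σ.min'_mem hne)]; omega

theorem min'_mem_erase_max {σ : Finset ℕ} (hne : σ.Nonempty) (h2 : 2 ≤ σ.card) :
    σ.min' hne ∈ σ.erase (σ.max' hne) :=
  Finset.mem_erase.mpr ⟨(Finset.min'_lt_max'_of_card σ (by omega)).ne, σ.min'_mem hne⟩

theorem max'_mem_erase_min {σ : Finset ℕ} (hne : σ.Nonempty) (h2 : 2 ≤ σ.card) :
    σ.max' hne ∈ σ.erase (σ.min' hne) :=
  Finset.mem_erase.mpr ⟨(Finset.min'_lt_max'_of_card σ (by omega)).ne', σ.max'_mem hne⟩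

theorem min'_erase_max {σ : Finset ℕ} (hne : σ.Nonempty) (h2 : 2 ≤ σ.card)
    (hne' : (σ.erase (σ.max' hne)).Nonempty) :
    (σ.erase (σ.max' hne)).min' hne' = σ.min' hne := by
  apply le_antisymm
  · exact Finset.min'_le _ _ (min'_mem_erase_max hne h2)
  · exact Finset.le_min' _ _ _ fun y hy => Finset.min'_le _ _ (Finset.mem_of_mem_erase hy)

theorem max'_erase_min {σ : Finset ℕ} (hne : σ.Nonempty) (h2 : 2 ≤ σ.card)
    (hne' : (σ.erase (σ.min' hne)).Nonempty) :
    (σ.erase (σ.min' hne)).max' hne' = σ.max' hne := by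
  apply le_antisymm
  · exact Finset.max'_le _ _ _ fun y hy => Finset.le_max' _ _ (Finset.mem_of_mem_erase hy)
  · exact Finset.le_max' _ _ (max'_mem_erase_min hne h2)

theorem erase_max_eq_singleton {σ : Finset ℕ} (hne : σ.Nonempty) (hc : σ.card = 2) :
    σ.erase (σ.max' hne) = {σ.min' hne} := by
  have h1 : (σ.erase (σ.max' hne)).card = 1 := by
    rw [Finset.card_erase_of_mem (σ.max'_mem hne)]; omega
  obtain ⟨x, hx⟩ := Finset.card_eq_one.mp h1
  have := min'_mem_erase_max hne (by omega)
  rw [hx] at this ⊢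
  rw [Finset.mem_singleton] at this
  rw [this]

theorem erase_min_eq_singleton {σ : Finset ℕ} (hne : σ.Nonempty) (hc : σ.card = 2) :
    σ.erase (σ.min' hne) = {σ.max' hne} := by
  have h1 : (σ.erase (σ.min' hne)).card = 1 := by
    rw [Finset.card_erase_of_mem (σ.min'_mem hne)]; omega
  obtain ⟨x, hx⟩ := Finset.card_eq_one.mp h1
  have := max'_mem_erase_min hne (by omega)
  rw [hx] at this ⊢
  rw [Finset.mem_singleton] at this
  rw [this]

/-! ### The tree of the construction -/

/-- `σ` is a node of the unfolding tree. -/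
def IsTree (f : ℕ → Vdot Q) (σ : Finset ℕ) : Prop :=
  σ.Nonempty ∧ ∀ ν, InitSeg ν σ → ν ≠ σ → ν.Nonempty → ∃ a, w f ν = Vdot.sup a

theorem isTree_singleton (f : ℕ → Vdot Q) (n : ℕ) : IsTree f {n} := by
  refine ⟨Finset.singleton_nonempty n, ?_⟩
  intro ν hν hne hn
  exfalso
  rcases Finset.subset_singleton_iff.mp hν.1 with h | h
  · exact hn.ne_empty h
  · exact hne h

theorem isTree_hered {f : ℕ → Vdot Q} {μ ν : Finset ℕ} (h : IsTree f μ) (hν : InitSeg ν μ)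
    (hne : ν ≠ μ) (hn : ν.Nonempty) : IsTree f ν := by
  refine ⟨hn, fun ρ hρ hρν hρn => h.2 ρ (initSeg_trans hρ hν) ?_ hρn⟩
  rintro rfl
  exact hne (Finset.Subset.antisymm hν.1 hρ.1)

theorem w_propUp {f : ℕ → Vdot Q} {q : Q} : ∀ (n : ℕ) (μ ν : Finset ℕ), μ.card = n →
    InitSeg ν μ → ν.Nonempty → w f ν = .up q → w f μ = .up q := by
  intro n
  induction n using Nat.strong_induction_on with
  | _ n IH =>
  intro μ ν hn hνμ hν hwq
  by_cases he : ν = μ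
  · rwa [he] at hwq
  · have hμne : μ.Nonempty := hν.mono hνμ.1
    have h2 : 2 ≤ μ.card := by
      have h1 := initSeg_subset_of_card hνμ he
      have h0 := Finset.card_pos.mpr hν
      omega
    have hcard : (μ.erase (μ.max' hμne)).card = n - 1 := by
      rw [Finset.card_erase_of_mem (μ.max'_mem hμne)]; omega
    exact w_big_up hμne h2
      (IH (n - 1) (by omega) _ ν hcard (initSeg_step hνμ he hμne) hν hwq)

/-! ### The main invariant -/

theorem main_inv {f : ℕ → Vdot Q} (hbad : ∀ i j, i < j → ¬ (f i).vles (f j)) :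
    ∀ (n : ℕ) (σ : Finset ℕ), σ.card = n → IsTree f σ → 2 ≤ n →
    ∀ (hne : σ.Nonempty), Good (w f σ) (w f (σ.erase (σ.min' hne))) := by
  intro n
  induction n using Nat.strong_induction_on with
  | _ n IH =>
  intro σ hn htree h2 hne
  have hςne : (σ.erase (σ.max' hne)).Nonempty := erase_max_nonempty hne (by omega)
  have hςcard : (σ.erase (σ.max' hne)).card = n - 1 := by
    rw [Finset.card_erase_of_mem (σ.max'_mem hne)]; omega
  have hςInit : InitSeg (σ.erase (σ.max' hne)) σ := initSeg_erase_max hne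
  have hςneq : σ.erase (σ.max' hne) ≠ σ := by
    intro he
    rw [he] at hςcard; omega
  obtain ⟨a, ha⟩ := htree.2 _ hςInit hςneq hςne
  have claimA : ¬ (w f (σ.erase (σ.max' hne))).vles (w f (σ.erase (σ.min' hne))) := by
    by_cases hc2 : σ.card = 2
    · rw [erase_max_eq_singleton hne hc2, erase_min_eq_singleton hne hc2,
        w_one f (Finset.singleton_nonempty _) (Finset.card_singleton _),
        w_one f (Finset.singleton_nonempty _) (Finset.card_singleton _)]
      simp only [Finset.min'_singleton]
      exact hbad _ _ (Finset.min'_lt_max'_of_card σ (by omega))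
    · have h3 : 3 ≤ n := by omega
      have hςtree : IsTree f (σ.erase (σ.max' hne)) := isTree_hered htree hςInit hςneq hςne
      have IHς := IH (n-1) (by omega) _ hςcard hςtree (by omega) hςne
      have hσ'ne : (σ.erase (σ.min' hne)).Nonempty := erase_min_nonempty hne (by omega)
      have hσ'card : (σ.erase (σ.min' hne)).card = n - 1 := by
        rw [Finset.card_erase_of_mem (σ.min'_mem hne)]; omega
      have hσ'2 : 2 ≤ (σ.erase (σ.min' hne)).card := by omega
      have hkey : (σ.erase (σ.max' hne)).erase ((σ.erase (σ.max' hne)).min' hςne)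
          = (σ.erase (σ.min' hne)).erase ((σ.erase (σ.min' hne)).max' hσ'ne) := by
        rw [min'_erase_max hne (by omega) hςne, max'_erase_min hne (by omega) hσ'ne]
        exact Finset.erase_right_comm
      cases hw : w f ((σ.erase (σ.max' hne)).erase ((σ.erase (σ.max' hne)).min' hςne)) with
      | up q' =>
        have hz : w f (σ.erase (σ.min' hne)) = .up q' :=
          w_big_up hσ'ne hσ'2 (by rw [← hkey]; exact hw)
        rw [hz]
        rw [hw] at IHς
        exact IHς
      | sup b =>
        obtain ⟨j, hj⟩ := w_big_sup hσ'ne hσ'2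
          (show w f ((σ.erase (σ.min' hne)).erase ((σ.erase (σ.min' hne)).max' hσ'ne)) = .sup b
            by rw [← hkey]; exact hw)
        rw [hj]
        rw [hw] at IHς
        exact IHς j
  rw [ha] at claimA
  exact w_big_good hne (by omega) ha (exists_good claimA)

/-! ### Descent lemmas -/

theorem desc_neg {f : ℕ → Vdot Q} {x : Vdot Q} : ∀ (n : ℕ) (τ ν : Finset ℕ), τ.card = n →
    IsTree f τ → InitSeg ν τ → ν.Nonempty → ¬ x.vles (w f ν) → ¬ x.vles (w f τ) := by
  intro n
  induction n using Nat.strong_induction_on with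
  | _ n IH =>
  intro τ ν hn ht hi hν hx
  by_cases he : ν = τ
  · rwa [he] at hx
  · have hτne : τ.Nonempty := hν.mono hi.1
    have h2 : 2 ≤ τ.card := by
      have h1 := initSeg_subset_of_card hi he
      have h0 := Finset.card_pos.mpr hν
      omega
    have hTmne : (τ.erase (τ.max' hτne)).Nonempty := erase_max_nonempty hτne h2
    have hTmi : InitSeg (τ.erase (τ.max' hτne)) τ := initSeg_erase_max hτne
    have hTmcard : (τ.erase (τ.max' hτne)).card = n - 1 := by
      rw [Finset.card_erase_of_mem (τ.max'_mem hτne)]; omega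
    have hTmneq : τ.erase (τ.max' hτne) ≠ τ := by
      intro hee; rw [hee] at hTmcard; omega
    obtain ⟨a, ha⟩ := ht.2 _ hTmi hTmneq hTmne
    have hrec : ¬ x.vles (w f (τ.erase (τ.max' hτne))) :=
      IH (n-1) (by omega) _ ν hTmcard (isTree_hered ht hTmi hTmneq hTmne)
        (initSeg_step hi he hτne) hν hx
    obtain ⟨i, hi'⟩ := w_big_sup hτne h2 ha
    rw [hi']
    rw [ha] at hrec
    exact not_vles_mem hrec i

theorem good_desc {f : ℕ → Vdot Q} {x : Vdot Q} : ∀ (n : ℕ) (τ ν : Finset ℕ), τ.card = n →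
    IsTree f τ → InitSeg ν τ → ν.Nonempty → ν ≠ τ → Good x (w f ν) → ¬ x.vles (w f τ) := by
  intro n
  induction n using Nat.strong_induction_on with
  | _ n IH =>
  intro τ ν hn ht hi hν he hg
  have hτne : τ.Nonempty := hν.mono hi.1
  have h2 : 2 ≤ τ.card := by
    have h1 := initSeg_subset_of_card hi he
    have h0 := Finset.card_pos.mpr hν
    omega
  have hTmne : (τ.erase (τ.max' hτne)).Nonempty := erase_max_nonempty hτne h2
  have hTmi : InitSeg (τ.erase (τ.max' hτne)) τ := initSeg_erase_max hτne
  have hTmcard : (τ.erase (τ.max' hτne)).card = n - 1 := by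
    rw [Finset.card_erase_of_mem (τ.max'_mem hτne)]; omega
  have hTmneq : τ.erase (τ.max' hτne) ≠ τ := by
    intro hee; rw [hee] at hTmcard; omega
  obtain ⟨a, ha⟩ := ht.2 _ hTmi hTmneq hTmne
  obtain ⟨i, hi'⟩ := w_big_sup hτne h2 ha
  by_cases he' : ν = τ.erase (τ.max' hτne)
  · rw [hi']
    have hg' : Good x (Vdot.sup a) := by rw [← ha, ← he']; exact hg
    exact hg' i
  · have hrec : ¬ x.vles (w f (τ.erase (τ.max' hτne))) :=
      IH (n-1) (by omega) _ ν hTmcard (isTree_hered ht hTmi hTmneq hTmne)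
        (initSeg_step hi he hτne) hν he' hg
    rw [hi']
    rw [ha] at hrec
    exact not_vles_mem hrec i

/-! ### Rank lemmas -/

theorem rk_le_rkp (x : Vdot Q) : x.rk ≤ x.rkp := by
  cases x with
  | up q => exact le_rfl
  | sup c =>
    show (⨆ n, (c n).rkp) ≤ (⨆ n, (c n).rkp) + 1
    rw [Ordinal.add_one_eq_succ]; exact (Order.lt_succ _).le

theorem rkp_mem_le (b : ℕ → Vdot Q) (j : ℕ) : (b j).rkp ≤ (Vdot.sup b).rk :=
  le_ciSup (Ordinal.bddAbove_range _) j

theorem rk_mem_le (b : ℕ → Vdot Q) (j : ℕ) : (b j).rk ≤ (Vdot.sup b).rk :=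
  (rk_le_rkp _).trans (rkp_mem_le b j)

theorem rk_mem_lt (b : ℕ → Vdot Q) (j : ℕ) {c : ℕ → Vdot Q} (h : b j = Vdot.sup c) :
    (b j).rk < (Vdot.sup b).rk := by
  have h1 : (b j).rk < (b j).rkp := by
    rw [h]
    show (⨆ n, (c n).rkp) < (⨆ n, (c n).rkp) + 1
    rw [Ordinal.add_one_eq_succ]
    exact Order.lt_succ _
  exact h1.trans_le (rkp_mem_le b j)

theorem rk_desc_le {f : ℕ → Vdot Q} : ∀ (n : ℕ) (τ ν : Finset ℕ), τ.card = n →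
    IsTree f τ → InitSeg ν τ → ν.Nonempty → (w f τ).rk ≤ (w f ν).rk := by
  intro n
  induction n using Nat.strong_induction_on with
  | _ n IH =>
  intro τ ν hn ht hi hν
  by_cases he : ν = τ
  · rw [he]
  · have hτne : τ.Nonempty := hν.mono hi.1
    have h2 : 2 ≤ τ.card := by
      have h1 := initSeg_subset_of_card hi he
      have h0 := Finset.card_pos.mpr hν
      omega
    have hTmne : (τ.erase (τ.max' hτne)).Nonempty := erase_max_nonempty hτne h2
    have hTmi : InitSeg (τ.erase (τ.max' hτne)) τ := initSeg_erase_max hτne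
    have hTmcard : (τ.erase (τ.max' hτne)).card = n - 1 := by
      rw [Finset.card_erase_of_mem (τ.max'_mem hτne)]; omega
    have hTmneq : τ.erase (τ.max' hτne) ≠ τ := by
      intro hee; rw [hee] at hTmcard; omega
    obtain ⟨a, ha⟩ := ht.2 _ hTmi hTmneq hTmne
    obtain ⟨i, hi'⟩ := w_big_sup hτne h2 ha
    have hrec : (w f (τ.erase (τ.max' hτne))).rk ≤ (w f ν).rk :=
      IH (n-1) (by omega) _ ν hTmcard (isTree_hered ht hTmi hTmneq hTmne)
        (initSeg_step hi he hτne) hν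
    calc (w f τ).rk = (a i).rk := by rw [hi']
    _ ≤ (Vdot.sup a).rk := rk_mem_le a i
    _ = (w f (τ.erase (τ.max' hτne))).rk := by rw [ha]
    _ ≤ (w f ν).rk := hrec

theorem rk_desc_lt {f : ℕ → Vdot Q} {τ ν : Finset ℕ} {c : ℕ → Vdot Q} (ht : IsTree f τ)
    (hi : InitSeg ν τ) (hν : ν.Nonempty) (hne : ν ≠ τ) (hc : w f τ = .sup c) :
    (w f τ).rk < (w f ν).rk := by
  have hτne : τ.Nonempty := hν.mono hi.1
  have h2 : 2 ≤ τ.card := by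
    have h1 := initSeg_subset_of_card hi hne
    have h0 := Finset.card_pos.mpr hν
    omega
  have hTmne : (τ.erase (τ.max' hτne)).Nonempty := erase_max_nonempty hτne h2
  have hTmi : InitSeg (τ.erase (τ.max' hτne)) τ := initSeg_erase_max hτne
  have hTmcard : (τ.erase (τ.max' hτne)).card = τ.card - 1 := by
    rw [Finset.card_erase_of_mem (τ.max'_mem hτne)]
  have hTmneq : τ.erase (τ.max' hτne) ≠ τ := by
    intro hee; rw [hee] at hTmcard; omega
  obtain ⟨a, ha⟩ := ht.2 _ hTmi hTmneq hTmne
  obtain ⟨i, hi'⟩ := w_big_sup hτne h2 ha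
  have hstep : (w f τ).rk < (w f (τ.erase (τ.max' hτne))).rk := by
    rw [hi', ha]
    exact rk_mem_lt a i (hi'.symm.trans hc)
  have hrest : (w f (τ.erase (τ.max' hτne))).rk ≤ (w f ν).rk :=
    rk_desc_le _ _ ν rfl (isTree_hered ht hTmi hTmneq hTmne) (initSeg_step hi hne hτne) hν
  exact hstep.trans_le hrest

/-! ### Extracting the root label -/

def vroot : Vdot Q → Q
  | .up q => q
  | .sup c => vroot (c 0)

/-! ### Every infinite set has a leaf initial segment -/

theorem exists_leaf (f : ℕ → Vdot Q) (X : Set ℕ) (hX : X.Infinite) :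
    ∃ σ, (IsTree f σ ∧ ∃ q, w f σ = Vdot.up q) ∧ InitSegSet σ X := by
  classical
  have hX' : (setOf (· ∈ X)).Infinite := hX
  set N : ℕ → ℕ := Nat.nth (· ∈ X) with hN
  have hmono : StrictMono N := Nat.nth_strictMono hX'
  have hmem : ∀ j, N j ∈ X := Nat.nth_mem_of_infinite hX'
  set ν : ℕ → Finset ℕ := fun k => (Finset.range (k+1)).image N with hν
  have hcard : ∀ k, (ν k).card = k + 1 := by
    intro k
    rw [hν]
    rw [Finset.card_image_of_injective _ hmono.injective, Finset.card_range]
  have hνne : ∀ k, (ν k).Nonempty := fun k => Finset.card_pos.mp (by rw [hcard]; omega)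
  have hmemν : ∀ k j, j ≤ k → N j ∈ ν k := by
    intro k j hj
    exact Finset.mem_image_of_mem N (Finset.mem_range.mpr (by omega))
  have hmemν' : ∀ k x, x ∈ ν k → ∃ j, j ≤ k ∧ x = N j := by
    intro k x hx
    obtain ⟨j, hj, rfl⟩ := Finset.mem_image.mp hx
    exact ⟨j, Nat.le_of_lt_succ (Finset.mem_range.mp hj), rfl⟩
  have hinitX : ∀ k, InitSegSet (ν k) X := by
    intro k
    constructor
    · intro x hx
      obtain ⟨j, _, rfl⟩ := hmemν' k x hx
      exact hmem j
    · intro a ha b hb hba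
      obtain ⟨j, hj, rfl⟩ := hmemν' k a ha
      obtain ⟨m, hm⟩ : ∃ m, N m = b := ⟨Nat.count (· ∈ X) b, Nat.nth_count hb⟩
      have : m ≤ j := by
        rw [← hm] at hba
        exact (hmono.le_iff_le).mp hba
      rw [← hm]
      exact hmemν k m (this.trans hj)
  have hmax : ∀ k (h : (ν (k+1)).Nonempty), (ν (k+1)).max' h = N (k+1) := by
    intro k h
    apply le_antisymm
    · apply Finset.max'_le
      intro y hy
      obtain ⟨j, hj, rfl⟩ := hmemν' (k+1) y hy
      exact hmono.monotone hj
    · exact Finset.le_max' _ _ (hmemν (k+1) (k+1) le_rfl)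
  have herase : ∀ k (h : (ν (k+1)).Nonempty), (ν (k+1)).erase ((ν (k+1)).max' h) = ν k := by
    intro k h
    rw [hmax k h]
    have : ν (k+1) = insert (N (k+1)) (ν k) := by
      rw [hν]
      show (Finset.range (k+2)).image N = _
      rw [Finset.range_add_one, Finset.image_insert]
    rw [this, Finset.erase_insert]
    intro hc
    obtain ⟨j, hj, hj'⟩ := hmemν' k _ hc
    exact absurd (hmono.injective hj'.symm) (by omega)
  have hinitν : ∀ k ρ, InitSeg ρ (ν k) → ρ.Nonempty → ∃ j, j ≤ k ∧ ρ = ν j := by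
    intro k
    induction k with
    | zero =>
      intro ρ hρ hρne
      refine ⟨0, le_rfl, ?_⟩
      have h0 : ν 0 = {N 0} := by
        rw [hν]; show (Finset.range 1).image N = _
        rw [Finset.range_one, Finset.image_singleton]
      rcases Finset.subset_singleton_iff.mp (h0 ▸ hρ.1) with h | h
      · exact absurd h hρne.ne_empty
      · rw [h, h0]
    | succ k IH =>
      intro ρ hρ hρne
      by_cases he : ρ = ν (k+1)
      · exact ⟨k+1, le_rfl, he⟩
      · have := initSeg_step hρ he (hνne (k+1))
        rw [herase k (hνne (k+1))] at this
        obtain ⟨j, hj, hj'⟩ := IH ρ this hρne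
        exact ⟨j, by omega, hj'⟩
  by_contra hcon
  push_neg at hcon
  have key : ∀ k, IsTree f (ν k) ∧ ∀ q, w f (ν k) ≠ Vdot.up q := by
    intro k
    induction k using Nat.strong_induction_on with
    | _ k IH =>
    have htree : IsTree f (ν k) := by
      refine ⟨hνne k, ?_⟩
      intro ρ hρ hρne hρn
      obtain ⟨j, hj, rfl⟩ := hinitν k ρ hρ hρn
      have hjk : j < k := by
        rcases lt_or_eq_of_le hj with h | h
        · exact h
        · exact absurd (h ▸ rfl) hρne
      cases hw : w f (ν j) with
      | up q => exact absurd hw ((IH j hjk).2 q)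
      | sup a => exact ⟨a, rfl⟩
    refine ⟨htree, ?_⟩
    intro q hq
    exact hcon (ν k) ⟨htree, q, hq⟩ (hinitX k)
  have hsup : ∀ k, ∃ a, w f (ν k) = Vdot.sup a := by
    intro k
    cases hw : w f (ν k) with
    | up q => exact absurd hw ((key k).2 q)
    | sup a => exact ⟨a, rfl⟩
  have hdesc : ∀ k, (w f (ν (k+1))).rk < (w f (ν k)).rk := by
    intro k
    obtain ⟨a, ha⟩ := hsup k
    obtain ⟨c, hc⟩ := hsup (k+1)
    have h2 : 2 ≤ (ν (k+1)).card := by rw [hcard]; omega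
    have ha' : w f ((ν (k+1)).erase ((ν (k+1)).max' (hνne (k+1)))) = Vdot.sup a := by
      rw [herase k (hνne (k+1))]; exact ha
    obtain ⟨i, hi⟩ := w_big_sup (hνne (k+1)) h2 ha'
    rw [hi, ha]
    exact rk_mem_lt a i (hi.symm.trans hc)
  exact (RelEmbedding.natGT (fun k => (w f (ν k)).rk) hdesc).not_wellFounded
    Ordinal.lt_wf

end Statement4Aux

theorem statement4 {Q : Type u} [Preorder Q] (α : Ordinal.{0})
    (f : ℕ → Vdot Q) (hmem : ∀ i, Vdot.memV α (f i))
    (hbad : ∀ i j, i < j → ¬ Vdot.vles (f i) (f j)) :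
    ∃ (Fr : Front) (g : Finset ℕ → Q), Fr.rank ≤ α ∧ BadArray Fr g := by
  classical
  set Fset : Set (Finset ℕ) := {σ | IsTree f σ ∧ ∃ q, w f σ = Vdot.up q} with hFset
  have hanti : ∀ σ ∈ Fset, ∀ τ ∈ Fset, InitSeg σ τ → σ = τ := by
    rintro σ ⟨hσt, q, hσq⟩ τ ⟨hτt, -, -⟩ hst
    by_contra hne
    obtain ⟨a, ha⟩ := hτt.2 σ hst hne hσt.1
    rw [hσq] at ha
    exact nomatch ha
  have hcover : ∀ X : Set ℕ, X.Infinite → ∃ σ ∈ Fset, InitSegSet σ X := by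
    intro X hX
    obtain ⟨σ, h1, h2⟩ := exists_leaf f X hX
    exact ⟨σ, h1, h2⟩
  have hinf : Fset.Infinite := by
    have h : ∀ n : ℕ, ∃ σ, σ ∈ Fset ∧ InitSegSet σ (Set.Ici n) := by
      intro n
      obtain ⟨σ, h1, h2⟩ := hcover (Set.Ici n) (Set.Ici_infinite n)
      exact ⟨σ, h1, h2⟩
    choose φ hφF hφI using h
    have hφmin : ∀ n, n ∈ φ n ∧ ∀ x ∈ φ n, n ≤ x := by
      intro n
      have hn : ∀ x ∈ φ n, n ≤ x := fun x hx => (hφI n).1 hx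
      have hne := (hφF n).1.1
      exact ⟨(hφI n).2 ((φ n).min' hne) (Finset.min'_mem _ hne) n
        (Set.mem_Ici.mpr le_rfl) (hn _ (Finset.min'_mem _ hne)), hn⟩
    have hφinj : Function.Injective φ := by
      intro n m he
      have h1 : m ≤ n := (hφmin m).2 n (he ▸ (hφmin n).1)
      have h2 : n ≤ m := (hφmin n).2 m (he.symm ▸ (hφmin m).1)
      omega
    exact Set.infinite_of_injective_forall_mem hφinj hφF
  have hrkstrict : ∀ σ τ : Finset ℕ,
      (∃ ρ ∈ Fset, InitSeg σ ρ ∧ σ ≠ ρ) → (∃ ρ ∈ Fset, InitSeg τ ρ ∧ τ ≠ ρ) →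
      InitSeg σ τ → σ ≠ τ →
      (if τ = ∅ then α else (w f τ).rk) < (if σ = ∅ then α else (w f σ).rk) := by
    rintro σ τ ⟨ρ, hρF, hρi, hρne⟩ ⟨ρ', hρ'F, hρ'i, hρ'ne⟩ hστ hne
    have hτne : τ.Nonempty := by
      rcases Finset.eq_empty_or_nonempty τ with h | h
      · subst h
        exact absurd (Finset.subset_empty.mp hστ.1) hne
      · exact h
    have hτtree : IsTree f τ := isTree_hered hρ'F.1 hρ'i hρ'ne hτne
    obtain ⟨c, hc⟩ : ∃ c, w f τ = Vdot.sup c := hρ'F.1.2 τ hρ'i hρ'ne hτne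
    rw [if_neg hτne.ne_empty]
    by_cases hσe : σ = ∅
    · rw [if_pos hσe]
      have hτ1 : InitSeg {τ.min' hτne} τ := initSeg_singleton_min hτne
      have hle : (w f τ).rk ≤ (w f {τ.min' hτne}).rk :=
        rk_desc_le _ _ _ rfl hτtree hτ1 (Finset.singleton_nonempty _)
      have hw1 : w f {τ.min' hτne} = f (τ.min' hτne) := by
        rw [w_one f (Finset.singleton_nonempty _) (Finset.card_singleton _),
          Finset.min'_singleton]
      have hfα : (f (τ.min' hτne)).rk < α := by
        rcases hmem (τ.min' hτne) with ⟨q, hq⟩ | h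
        · exfalso
          by_cases h1 : ({τ.min' hτne} : Finset ℕ) = τ
          · rw [h1] at hw1
            rw [hw1, hq] at hc
            exact nomatch hc
          · obtain ⟨a, ha⟩ := hτtree.2 _ hτ1 h1 (Finset.singleton_nonempty _)
            rw [hw1, hq] at ha
            exact nomatch ha
        · exact h
      rw [hw1] at hle
      exact hle.trans_lt hfα
    · rw [if_neg hσe]
      exact rk_desc_lt hτtree hστ (Finset.nonempty_iff_ne_empty.mpr hσe) hne hc
  refine ⟨⟨Fset, hinf, hanti, fun X hX _ => hcover X hX,
    fun σ => if σ = ∅ then α else (w f σ).rk, hrkstrict⟩,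
    fun σ => vroot (w f σ), ?_, ?_⟩
  · show (if (∅ : Finset ℕ) = ∅ then α else (w f ∅).rk) ≤ α
    rw [if_pos rfl]
  · rintro σ ⟨hσt, qσ, hσq⟩ τ ⟨hτt, qτ, hτq⟩ ⟨hσne, hτne, hlt, hcomp⟩ hle
    have hle' : qσ ≤ qτ := by
      have e1 : vroot (w f σ) = qσ := by rw [hσq]; rfl
      have e2 : vroot (w f τ) = qτ := by rw [hτq]; rfl
      have hle2 : vroot (w f σ) ≤ vroot (w f τ) := hle
      rwa [e1, e2] at hle2
    have hvles : (w f σ).vles (w f τ) := by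
      rw [hσq, hτq]
      exact hle'
    by_cases h1 : σ.card = 1
    · have hτ1 : InitSeg {τ.min' hτne} τ := initSeg_singleton_min hτne
      have hbad1 : ¬ (w f σ).vles (w f {τ.min' hτne}) := by
        rw [w_one f hσne h1, w_one f (Finset.singleton_nonempty _) (Finset.card_singleton _),
          Finset.min'_singleton]
        exact hbad _ _ hlt
      exact desc_neg _ _ _ rfl hτt hτ1 (Finset.singleton_nonempty _) hbad1 hvles
    · have h2 : 2 ≤ σ.card := by
        have := Finset.card_pos.mpr hσne
        omega
      have hσ'ne : (σ.erase (σ.min' hσne)).Nonempty := erase_min_nonempty hσne h2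
      have hgood : Good (w f σ) (w f (σ.erase (σ.min' hσne))) :=
        main_inv hbad σ.card σ rfl hσt h2 hσne
      rcases hcomp with hcase | hcase
      · by_cases he : σ.erase (σ.min' hσne) = τ
        · rw [he, hτq] at hgood
          rw [hτq] at hvles
          exact hgood hvles
        · exact good_desc _ _ _ rfl hτt hcase hσ'ne he hgood hvles
      · have hw' : w f (σ.erase (σ.min' hσne)) = Vdot.up qτ :=
          w_propUp _ _ τ rfl hcase hτne hτq
        rw [hw'] at hgood
        rw [hτq] at hvles
        exact hgood hvles
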